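/- arXiv:2605.23813 — 8 statements merged into one kernel-verified Lean document; each statement's English description precedes it below -/
import Mathlib

section
/- Let f : ℝⁿ × ℝⁿ → ℝⁿ be continuously differentiable, and let q : ℝ → ℝⁿ be twice differentiable and u, Λ₁, Λ₂ : ℝ → ℝⁿ be differentiable curves such that u is twice differentiable and the map t ↦ D₂f(q(t), q̇(t)) (the partial Fréchet derivative of f in its second argument, evaluated along the curve) is differentiable. Suppose that for all t: Λ̇₁(t) = −(D₁f(q(t), q̇(t)))ᵀ Λ₂(t), Λ̇₂(t) = −Λ₁(t) − (D₂f(q(t), q̇(t)))ᵀ Λ₂(t), and u(t) = −Λ₂(t). Then for all t, ü(t) = −(D₂f(q(t), q̇(t)))ᵀ u̇(t) − [ (d/dt)(D₂f(q(t), q̇(t)))ᵀ − (D₁f(q(t), q̇(t)))ᵀ ] u(t). -/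
/-- The costate equations and stationarity condition of the minimum-control-effort
problem for `q̈ = f(q, q̇) + u` imply the second-order ODE for the optimal control `u`. -/
theorem stmt_0 (n : ℕ)
    (f : EuclideanSpace ℝ (Fin n) × EuclideanSpace ℝ (Fin n) → EuclideanSpace ℝ (Fin n))
    (hf : ContDiff ℝ 1 f)
    (q u Λ₁ Λ₂ : ℝ → EuclideanSpace ℝ (Fin n))
    (hq : Differentiable ℝ q) (hq' : Differentiable ℝ (deriv q))
    (hu : Differentiable ℝ u) (hu' : Differentiable ℝ (deriv u))
    (hΛ₁ : Differentiable ℝ Λ₁) (hΛ₂ : Differentiable ℝ Λ₂)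
    (D₁ D₂ : ℝ → EuclideanSpace ℝ (Fin n) →L[ℝ] EuclideanSpace ℝ (Fin n))
    (hD₁ : ∀ t, D₁ t = fderiv ℝ (fun a => f (a, deriv q t)) (q t))
    (hD₂ : ∀ t, D₂ t = fderiv ℝ (fun v => f (q t, v)) (deriv q t))
    (hD₂d : Differentiable ℝ D₂)
    (hΛ₁' : ∀ t, deriv Λ₁ t = -(ContinuousLinearMap.adjoint (D₁ t) (Λ₂ t)))
    (hΛ₂' : ∀ t, deriv Λ₂ t = -Λ₁ t - ContinuousLinearMap.adjoint (D₂ t) (Λ₂ t))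
    (hu₀ : ∀ t, u t = -Λ₂ t) :
    ∀ t, deriv (deriv u) t =
      -(ContinuousLinearMap.adjoint (D₂ t) (deriv u t))
        - (deriv (fun s => ContinuousLinearMap.adjoint (D₂ s)) t
            - ContinuousLinearMap.adjoint (D₁ t)) (u t) := by
  classical
  set A : ℝ → EuclideanSpace ℝ (Fin n) →L[ℝ] EuclideanSpace ℝ (Fin n) :=
    fun s => ContinuousLinearMap.adjoint (D₂ s) with hA_def
  have hAd : Differentiable ℝ A := by
    intro s
    exact ((ContinuousLinearMap.adjoint.toContinuousLinearEquiv.differentiable.differentiableAt).comp s (hD₂d s))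
  have hΛ₂u : ∀ t, Λ₂ t = -u t := by
    intro t; rw [hu₀ t, neg_neg]
  have hderiv_u : deriv u = fun t => Λ₁ t - A t (u t) := by
    funext t
    have : u = fun s => -Λ₂ s := funext hu₀
    rw [this, deriv.fun_neg, hΛ₂' t]
    simp [hΛ₂u t]
    abel
  intro t
  have h1 : HasDerivAt (fun s => A s (u s)) (deriv A t (u t) + A t (deriv u t)) t :=
    (hAd t).hasDerivAt.clm_apply (hu t).hasDerivAt
  have h2 : HasDerivAt (fun s => Λ₁ s - A s (u s))
      (deriv Λ₁ t - (deriv A t (u t) + A t (deriv u t))) t :=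
    (hΛ₁ t).hasDerivAt.sub h1
  have h3 : deriv (deriv u) t = deriv Λ₁ t - (deriv A t (u t) + A t (deriv u t)) := by
    conv_lhs => rw [hderiv_u]
    exact h2.deriv
  rw [h3, hΛ₁' t, hΛ₂u t]
  simp only [ContinuousLinearMap.sub_apply, map_neg]
  abel
end

section
/- Let g : ℝⁿ × ℝⁿ → ℝⁿ be twice continuously differentiable with v ↦ g(q, v) homogeneous of degree 2 (g(q, λv) = λ² g(q, v) for all λ ∈ ℝ), let h : ℝⁿ → ℝⁿ be continuously differentiable, and set f(q, v) = g(q, v) + h(q). Define L : ℝⁿ × ℝⁿ × ℝⁿ × ℝⁿ → ℝ by L(q, v, u, w) = ⟨w, v⟩ + ⟨u, f(q, v)⟩ + ½⟨u, u⟩. Let q, u : ℝ → ℝⁿ be twice continuously differentiable curves such that t ↦ D₂f(q(t), q̇(t)) is differentiable. Then the Euler–Lagrange equations of L with respect to the coordinates q along the curve, namely (d/dt)(∂L/∂v (q(t), q̇(t), u(t), u̇(t))) − ∂L/∂q (q(t), q̇(t), u(t), u̇(t)) = 0 for all t, hold if and only if for all t, ü(t) = −(D₂f(q(t), q̇(t)))ᵀ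 u̇(t) − [ (d/dt)(D₂f(q(t), q̇(t)))ᵀ − (D₁f(q(t), q̇(t)))ᵀ ] u(t). -/
open scoped RealInnerProductSpace

open InnerProductSpace in
lemma grad_aux_v {E : Type*} [NormedAddCommGroup E] [InnerProductSpace ℝ E] [CompleteSpace E]
    (u₀ w₀ : E) (c : ℝ) (φ : E → E) (x : E) (hφ : DifferentiableAt ℝ φ x) :
    HasGradientAt (fun v => ⟪w₀, v⟫ + ⟪u₀, φ v⟫ + c)
      (w₀ + ContinuousLinearMap.adjoint (fderiv ℝ φ x) u₀) x := by
  rw [hasGradientAt_iff_hasFDerivAt]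
  have H : HasFDerivAt (fun v => ⟪w₀, v⟫ + ⟪u₀, φ v⟫ + c)
      ((innerSL ℝ w₀) + (innerSL ℝ u₀).comp (fderiv ℝ φ x)) x :=
    (((innerSL ℝ w₀).hasFDerivAt).add
      (((innerSL ℝ u₀).hasFDerivAt).comp x hφ.hasFDerivAt)).add_const c
  refine H.congr_fderiv ?_
  ext y
  simp [inner_add_left, ContinuousLinearMap.adjoint_inner_left]

open InnerProductSpace in
lemma grad_aux_q {E : Type*} [NormedAddCommGroup E] [InnerProductSpace ℝ E] [CompleteSpace E]
    (u₀ : E) (c₁ c : ℝ) (φ : E → E) (x : E) (hφ : DifferentiableAt ℝ φ x) :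
    HasGradientAt (fun a => c₁ + ⟪u₀, φ a⟫ + c)
      (ContinuousLinearMap.adjoint (fderiv ℝ φ x) u₀) x := by
  rw [hasGradientAt_iff_hasFDerivAt]
  have H : HasFDerivAt (fun a => c₁ + ⟪u₀, φ a⟫ + c)
      ((innerSL ℝ u₀).comp (fderiv ℝ φ x)) x :=
    ((((innerSL ℝ u₀).hasFDerivAt).comp x hφ.hasFDerivAt).const_add c₁).add_const c
  refine H.congr_fderiv ?_
  ext y
  simp [ContinuousLinearMap.adjoint_inner_left]

lemma aux_alg {E : Type*} [AddCommGroup E] (X Y Z W : E) :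
    X + (Y + Z) - W = 0 ↔ X = -Z - (Y - W) := by
  constructor <;> intro hh
  · have h' : X = W - (Y + Z) := by rw [eq_sub_iff_add_eq, ← sub_eq_zero]; simpa using hh
    rw [h']; abel
  · rw [hh]; abel

/-- For the optimal-control Lagrangian `L(q, v, u, w) = ⟨w, v⟩ + ⟨u, f(q, v)⟩ + ½⟨u, u⟩`
of the controlled system `q̈ = f(q, q̇) + u`, the Euler–Lagrange equations with respect
to the generalized coordinates `q` hold along a curve iff the control satisfies
`ü = −(D₂f)ᵀ u̇ − [(d/dt)(D₂f)ᵀ − (D₁f)ᵀ] u` along the curve. -/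
theorem stmt_5 (n : ℕ)
    (g : EuclideanSpace ℝ (Fin n) × EuclideanSpace ℝ (Fin n) → EuclideanSpace ℝ (Fin n))
    (h : EuclideanSpace ℝ (Fin n) → EuclideanSpace ℝ (Fin n))
    (f : EuclideanSpace ℝ (Fin n) × EuclideanSpace ℝ (Fin n) → EuclideanSpace ℝ (Fin n))
    (hg : ContDiff ℝ 2 g) (hh : ContDiff ℝ 1 h)
    (hhom : ∀ (q : EuclideanSpace ℝ (Fin n)) (c : ℝ) (v : EuclideanSpace ℝ (Fin n)),
      g (q, c • v) = c ^ 2 • g (q, v))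
    (hf : ∀ q v, f (q, v) = g (q, v) + h q)
    (L : EuclideanSpace ℝ (Fin n) × EuclideanSpace ℝ (Fin n) × EuclideanSpace ℝ (Fin n) ×
      EuclideanSpace ℝ (Fin n) → ℝ)
    (hL : ∀ q v u w, L (q, v, u, w) = ⟪w, v⟫ + ⟪u, f (q, v)⟫ + (1/2 : ℝ) * ⟪u, u⟫)
    (q u : ℝ → EuclideanSpace ℝ (Fin n))
    (hq : ContDiff ℝ 2 q) (hu : ContDiff ℝ 2 u)
    (hD₂d : Differentiable ℝ (fun t => fderiv ℝ (fun v => f (q t, v)) (deriv q t))) :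
    (∀ t, deriv (fun s => gradient (fun v => L (q s, v, u s, deriv u s)) (deriv q s)) t
        - gradient (fun a => L (a, deriv q t, u t, deriv u t)) (q t) = 0)
    ↔ (∀ t, deriv (deriv u) t =
        -(ContinuousLinearMap.adjoint (fderiv ℝ (fun v => f (q t, v)) (deriv q t)) (deriv u t))
          - (deriv (fun s =>
                ContinuousLinearMap.adjoint (fderiv ℝ (fun v => f (q s, v)) (deriv q s))) t
              - ContinuousLinearMap.adjoint (fderiv ℝ (fun a => f (a, deriv q t)) (q t)))
            (u t)) := by
  -- f is C¹
  have hfeq : f = fun p => g p + h p.1 := funext fun p => by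
    have := hf p.1 p.2; simpa using this
  have hfC : ContDiff ℝ 1 f := by
    rw [hfeq]
    exact (hg.of_le one_le_two).add (hh.comp contDiff_fst)
  have hd2 : ∀ (a v : EuclideanSpace ℝ (Fin n)), DifferentiableAt ℝ (fun w => f (a, w)) v := fun a v =>
    ((hfC.differentiable one_ne_zero) (a, v)).comp v ((differentiableAt_const a).prodMk differentiableAt_id)
  have hd1 : ∀ (a v : EuclideanSpace ℝ (Fin n)), DifferentiableAt ℝ (fun w => f (w, v)) a := fun a v =>
    ((hfC.differentiable one_ne_zero) (a, v)).comp a (differentiableAt_id.prodMk (differentiableAt_const v))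
  set A : ℝ → (EuclideanSpace ℝ (Fin n) →L[ℝ] EuclideanSpace ℝ (Fin n)) := fun s => fderiv ℝ (fun v => f (q s, v)) (deriv q s) with hA
  set B : ℝ → (EuclideanSpace ℝ (Fin n) →L[ℝ] EuclideanSpace ℝ (Fin n)) := fun s => ContinuousLinearMap.adjoint (A s) with hB
  -- gradient in v
  have hgradv : ∀ s, gradient (fun v => L (q s, v, u s, deriv u s)) (deriv q s)
      = deriv u s + B s (u s) := by
    intro s
    have heq : (fun v => L (q s, v, u s, deriv u s))
        = fun v => ⟪deriv u s, v⟫ + ⟪u s, f (q s, v)⟫ + (1/2 : ℝ) * ⟪u s, u s⟫ :=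
      funext fun v => hL _ _ _ _
    rw [heq]
    exact (grad_aux_v (u s) (deriv u s) _ _ _ (hd2 (q s) (deriv q s))).gradient
  -- gradient in q
  have hgradq : ∀ t, gradient (fun a => L (a, deriv q t, u t, deriv u t)) (q t)
      = ContinuousLinearMap.adjoint (fderiv ℝ (fun a => f (a, deriv q t)) (q t)) (u t) := by
    intro t
    have heq : (fun a => L (a, deriv q t, u t, deriv u t))
        = fun a => ⟪deriv u t, deriv q t⟫ + ⟪u t, f (a, deriv q t)⟫
            + (1/2 : ℝ) * ⟪u t, u t⟫ :=
      funext fun a => hL _ _ _ _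
    rw [heq]
    exact (grad_aux_q (u t) _ _ _ _ (hd1 (q t) (deriv q t))).gradient
  -- differentiability of B
  have hBd : Differentiable ℝ B := by
    have : B = fun s =>
        ((ContinuousLinearMap.adjoint (E := EuclideanSpace ℝ (Fin n)) (F := EuclideanSpace ℝ (Fin n))).toLinearIsometry.toContinuousLinearMap)
          (A s) := rfl
    rw [this]
    exact (ContinuousLinearMap.differentiable _).comp hD₂d
  have huD : Differentiable ℝ u := hu.differentiable two_ne_zero
  have hu'D : Differentiable ℝ (deriv u) := by
    have h2 : ContDiff ℝ ((1 : ℕ∞) + 1) u := by exact_mod_cast hu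
    rw [contDiff_succ_iff_deriv] at h2
    exact h2.2.2.differentiable one_ne_zero
  -- derivative of the momentum
  have hderiv : ∀ t, deriv (fun s => deriv u s + B s (u s)) t
      = deriv (deriv u) t + (deriv B t (u t) + B t (deriv u t)) := by
    intro t
    have h1 : HasDerivAt (deriv u) (deriv (deriv u) t) t := (hu'D t).hasDerivAt
    have h2 : HasDerivAt (fun s => B s (u s)) (deriv B t (u t) + B t (deriv u t)) t :=
      (hBd t).hasDerivAt.clm_apply (huD t).hasDerivAt
    exact (h1.add h2).deriv
  constructor <;> intro H t <;> have Ht := H t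
  · rw [funext hgradv, hgradq, hderiv] at Ht
    rw [ContinuousLinearMap.sub_apply]
    exact (aux_alg _ _ _ _).mp Ht
  · rw [funext hgradv, hgradq, hderiv]
    rw [ContinuousLinearMap.sub_apply] at Ht
    exact (aux_alg _ _ _ _).mpr Ht
end

section
/- Let μ > 0 and let r, θ, u_r, u_θ : ℝ → ℝ be twice continuously differentiable with r(t) > 0 for all t. Define L(t) = u̇_r(t) ṙ(t) + u̇_θ(t) θ̇(t) + (r(t) θ̇(t)² − μ/r(t)²) u_r(t) − (2 ṙ(t) θ̇(t)/r(t)) u_θ(t) + ½ (u_r(t)² + u_θ(t)²), regarded as a function of the generalized coordinates (r, θ, u_r, u_θ) and their velocities. Then the two Euler–Lagrange equations of L with respect to the coordinates r and θ hold for all t if and only if for all t: ü_r = (θ̇² + 2μ/r³) u_r + (2θ̈/r) u_θ + (2θ̇/r) u̇_θ and ü_θ = −(2ṙθ̇ + 2rθ̈) u_r + (2r̈/r − 2ṙ²/r²) u_θ − 2rθ̇ u̇_r + (2ṙ/r) u̇_θ. -/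
/-- For the optimal-control Lagrangian of the planar two-body problem in polar
coordinates, the Euler–Lagrange equations with respect to `r` and `θ` hold along the
curve iff the controls satisfy the displayed second-order ODEs. -/
theorem stmt_8 (μ : ℝ) (hμ : 0 < μ)
    (r θ ur uθ : ℝ → ℝ)
    (hr : ContDiff ℝ 2 r) (hθ : ContDiff ℝ 2 θ)
    (hur : ContDiff ℝ 2 ur) (huθ : ContDiff ℝ 2 uθ)
    (hrpos : ∀ t, 0 < r t)
    (L : ℝ → ℝ → ℝ → ℝ → ℝ → ℝ → ℝ → ℝ → ℝ)
    (hL : ∀ R Θ UR UΘ vR vΘ vUR vUΘ,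
      L R Θ UR UΘ vR vΘ vUR vUΘ =
        vUR * vR + vUΘ * vΘ + (R * vΘ ^ 2 - μ / R ^ 2) * UR
          - (2 * vR * vΘ / R) * UΘ + (1/2 : ℝ) * (UR ^ 2 + UΘ ^ 2)) :
    ((∀ t, deriv (fun s => deriv
            (fun vR => L (r s) (θ s) (ur s) (uθ s) vR (deriv θ s) (deriv ur s) (deriv uθ s))
            (deriv r s)) t
          - deriv (fun R => L R (θ t) (ur t) (uθ t) (deriv r t) (deriv θ t) (deriv ur t)
              (deriv uθ t)) (r t) = 0)
      ∧ (∀ t, deriv (fun s => deriv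
            (fun vΘ => L (r s) (θ s) (ur s) (uθ s) (deriv r s) vΘ (deriv ur s) (deriv uθ s))
            (deriv θ s)) t
          - deriv (fun Θ => L (r t) Θ (ur t) (uθ t) (deriv r t) (deriv θ t) (deriv ur t)
              (deriv uθ t)) (θ t) = 0))
    ↔ (∀ t,
        deriv (deriv ur) t
          = (deriv θ t ^ 2 + 2 * μ / r t ^ 3) * ur t
            + (2 * deriv (deriv θ) t / r t) * uθ t + (2 * deriv θ t / r t) * deriv uθ t
        ∧ deriv (deriv uθ) t
          = -(2 * deriv r t * deriv θ t + 2 * r t * deriv (deriv θ) t) * ur t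
            + (2 * deriv (deriv r) t / r t - 2 * deriv r t ^ 2 / r t ^ 2) * uθ t
            - 2 * r t * deriv θ t * deriv ur t + (2 * deriv r t / r t) * deriv uθ t) := by
  have hrne : ∀ t, r t ≠ 0 := fun t => (hrpos t).ne'
  have hd2 : ∀ f : ℝ → ℝ, ContDiff ℝ 2 f →
      Differentiable ℝ f ∧ Differentiable ℝ (deriv f) := by
    intro f hf
    refine ⟨hf.differentiable (by norm_num), ?_⟩
    have := (contDiff_succ_iff_deriv.mp
      (by exact_mod_cast hf : ContDiff ℝ ((1 : ℕ) + 1) f)).2.2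
    exact this.differentiable (by norm_num)
  obtain ⟨hrd, hrd'⟩ := hd2 r hr
  obtain ⟨hθd, hθd'⟩ := hd2 θ hθ
  obtain ⟨hurd, hurd'⟩ := hd2 ur hur
  obtain ⟨huθd, huθd'⟩ := hd2 uθ huθ
  -- ∂L/∂vR along the curve
  have e1 : (fun s => deriv
      (fun vR => L (r s) (θ s) (ur s) (uθ s) vR (deriv θ s) (deriv ur s) (deriv uθ s))
      (deriv r s)) = fun s => deriv ur s - 2 * deriv θ s * uθ s / r s := by
    funext s
    simp only [hL]
    have h1 : (fun vR => deriv ur s * vR + deriv uθ s * deriv θ s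
          + (r s * deriv θ s ^ 2 - μ / r s ^ 2) * ur s
          - (2 * vR * deriv θ s / r s) * uθ s + (1/2 : ℝ) * (ur s ^ 2 + uθ s ^ 2))
        = fun vR => (deriv ur s - 2 * deriv θ s * uθ s / r s) * vR
          + (deriv uθ s * deriv θ s + (r s * deriv θ s ^ 2 - μ / r s ^ 2) * ur s
            + (1/2 : ℝ) * (ur s ^ 2 + uθ s ^ 2)) := by
      funext vR; ring
    rw [h1]
    have H := (((hasDerivAt_id' (deriv r s)).const_mul
      (deriv ur s - 2 * deriv θ s * uθ s / r s)).add_const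
      (deriv uθ s * deriv θ s + (r s * deriv θ s ^ 2 - μ / r s ^ 2) * ur s
        + (1/2 : ℝ) * (ur s ^ 2 + uθ s ^ 2))).deriv
    rw [H]; ring
  -- ∂L/∂vΘ along the curve
  have e3 : (fun s => deriv
      (fun vΘ => L (r s) (θ s) (ur s) (uθ s) (deriv r s) vΘ (deriv ur s) (deriv uθ s))
      (deriv θ s)) = fun s => deriv uθ s + 2 * r s * deriv θ s * ur s
        - 2 * deriv r s * uθ s / r s := by
    funext s
    simp only [hL]
    have h1 : (fun vΘ => deriv ur s * deriv r s + deriv uθ s * vΘ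
          + (r s * vΘ ^ 2 - μ / r s ^ 2) * ur s
          - (2 * deriv r s * vΘ / r s) * uθ s + (1/2 : ℝ) * (ur s ^ 2 + uθ s ^ 2))
        = fun vΘ => (r s * ur s) * vΘ ^ 2
          + (deriv uθ s - 2 * deriv r s * uθ s / r s) * vΘ
          + (deriv ur s * deriv r s - μ / r s ^ 2 * ur s
            + (1/2 : ℝ) * (ur s ^ 2 + uθ s ^ 2)) := by
      funext vΘ; ring
    rw [h1]
    have H := ((((hasDerivAt_pow 2 (deriv θ s)).const_mul (r s * ur s)).add
      ((hasDerivAt_id' (deriv θ s)).const_mul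
        (deriv uθ s - 2 * deriv r s * uθ s / r s))).add_const
      (deriv ur s * deriv r s - μ / r s ^ 2 * ur s
        + (1/2 : ℝ) * (ur s ^ 2 + uθ s ^ 2))).deriv
    exact H.trans (by push_cast; ring)
  -- ∂L/∂R
  have e2 : ∀ t, deriv (fun R => L R (θ t) (ur t) (uθ t) (deriv r t) (deriv θ t)
        (deriv ur t) (deriv uθ t)) (r t)
      = deriv θ t ^ 2 * ur t + 2 * μ / r t ^ 3 * ur t
        + 2 * deriv r t * deriv θ t * uθ t / r t ^ 2 := by
    intro t
    simp only [hL]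
    have h1 : (fun R => deriv ur t * deriv r t + deriv uθ t * deriv θ t
          + (R * deriv θ t ^ 2 - μ / R ^ 2) * ur t
          - (2 * deriv r t * deriv θ t / R) * uθ t
          + (1/2 : ℝ) * (ur t ^ 2 + uθ t ^ 2))
        = fun R => (deriv θ t ^ 2 * ur t) * R + (-(μ * ur t)) * (R ^ 2)⁻¹
          + (-(2 * deriv r t * deriv θ t * uθ t)) * R⁻¹
          + (deriv ur t * deriv r t + deriv uθ t * deriv θ t
            + (1/2 : ℝ) * (ur t ^ 2 + uθ t ^ 2)) := by
      funext R; ring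
    rw [h1]
    have H := (((((hasDerivAt_id' (r t)).const_mul (deriv θ t ^ 2 * ur t)).add
      (((hasDerivAt_pow 2 (r t)).inv (pow_ne_zero 2 (hrne t))).const_mul
        (-(μ * ur t)))).add
      ((hasDerivAt_inv (hrne t)).const_mul
        (-(2 * deriv r t * deriv θ t * uθ t)))).add_const
      (deriv ur t * deriv r t + deriv uθ t * deriv θ t
        + (1/2 : ℝ) * (ur t ^ 2 + uθ t ^ 2))).deriv
    refine H.trans ?_
    have h0 := hrne t
    field_simp
    ring
  -- ∂L/∂Θ = 0
  have e4 : ∀ t, deriv (fun Θ => L (r t) Θ (ur t) (uθ t) (deriv r t) (deriv θ t)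
        (deriv ur t) (deriv uθ t)) (θ t) = 0 := by
    intro t
    simp only [hL]
    exact deriv_const _ _
  -- first Euler–Lagrange equation ↔ first ODE
  have key1 : ∀ t, (deriv (fun s => deriv
        (fun vR => L (r s) (θ s) (ur s) (uθ s) vR (deriv θ s) (deriv ur s) (deriv uθ s))
        (deriv r s)) t
      - deriv (fun R => L R (θ t) (ur t) (uθ t) (deriv r t) (deriv θ t) (deriv ur t)
          (deriv uθ t)) (r t) = 0)
      ↔ deriv (deriv ur) t
          = (deriv θ t ^ 2 + 2 * μ / r t ^ 3) * ur t
            + (2 * deriv (deriv θ) t / r t) * uθ t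
            + (2 * deriv θ t / r t) * deriv uθ t := by
    intro t
    have H1 : HasDerivAt (fun s => deriv ur s - 2 * deriv θ s * uθ s / r s)
        (deriv (deriv ur) t
          - ((2 * deriv (deriv θ) t * uθ t + 2 * deriv θ t * deriv uθ t) * r t
            - 2 * deriv θ t * uθ t * deriv r t) / r t ^ 2) t :=
      (hurd' t).hasDerivAt.sub
        ((((hθd' t).hasDerivAt.const_mul 2).mul (huθd t).hasDerivAt).div
          (hrd t).hasDerivAt (hrne t))
    rw [e1, e2 t, H1.deriv]
    have h0 := hrne t
    have hident : deriv (deriv ur) t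
        - ((2 * deriv (deriv θ) t * uθ t + 2 * deriv θ t * deriv uθ t) * r t
          - 2 * deriv θ t * uθ t * deriv r t) / r t ^ 2
        - (deriv θ t ^ 2 * ur t + 2 * μ / r t ^ 3 * ur t
          + 2 * deriv r t * deriv θ t * uθ t / r t ^ 2)
        = deriv (deriv ur) t
          - ((deriv θ t ^ 2 + 2 * μ / r t ^ 3) * ur t
            + (2 * deriv (deriv θ) t / r t) * uθ t
            + (2 * deriv θ t / r t) * deriv uθ t) := by
      field_simp
      ring
    rw [hident, sub_eq_zero]
  -- second Euler–Lagrange equation ↔ second ODE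
  have key2 : ∀ t, (deriv (fun s => deriv
        (fun vΘ => L (r s) (θ s) (ur s) (uθ s) (deriv r s) vΘ (deriv ur s) (deriv uθ s))
        (deriv θ s)) t
      - deriv (fun Θ => L (r t) Θ (ur t) (uθ t) (deriv r t) (deriv θ t) (deriv ur t)
          (deriv uθ t)) (θ t) = 0)
      ↔ deriv (deriv uθ) t
          = -(2 * deriv r t * deriv θ t + 2 * r t * deriv (deriv θ) t) * ur t
            + (2 * deriv (deriv r) t / r t - 2 * deriv r t ^ 2 / r t ^ 2) * uθ t
            - 2 * r t * deriv θ t * deriv ur t + (2 * deriv r t / r t) * deriv uθ t := by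
    intro t
    have H2 : HasDerivAt (fun s => deriv uθ s + 2 * r s * deriv θ s * ur s
          - 2 * deriv r s * uθ s / r s)
        (deriv (deriv uθ) t
          + ((2 * deriv r t * deriv θ t + 2 * r t * deriv (deriv θ) t) * ur t
            + 2 * r t * deriv θ t * deriv ur t)
          - ((2 * deriv (deriv r) t * uθ t + 2 * deriv r t * deriv uθ t) * r t
            - 2 * deriv r t * uθ t * deriv r t) / r t ^ 2) t :=
      ((huθd' t).hasDerivAt.add
        ((((hrd t).hasDerivAt.const_mul 2).mul (hθd' t).hasDerivAt).mul
          (hurd t).hasDerivAt)).sub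
        ((((hrd' t).hasDerivAt.const_mul 2).mul (huθd t).hasDerivAt).div
          (hrd t).hasDerivAt (hrne t))
    rw [e3, e4 t, H2.deriv, sub_zero]
    have h0 := hrne t
    have hident : deriv (deriv uθ) t
        + ((2 * deriv r t * deriv θ t + 2 * r t * deriv (deriv θ) t) * ur t
          + 2 * r t * deriv θ t * deriv ur t)
        - ((2 * deriv (deriv r) t * uθ t + 2 * deriv r t * deriv uθ t) * r t
          - 2 * deriv r t * uθ t * deriv r t) / r t ^ 2
        = deriv (deriv uθ) t
          - (-(2 * deriv r t * deriv θ t + 2 * r t * deriv (deriv θ) t) * ur t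
            + (2 * deriv (deriv r) t / r t - 2 * deriv r t ^ 2 / r t ^ 2) * uθ t
            - 2 * r t * deriv θ t * deriv ur t
            + (2 * deriv r t / r t) * deriv uθ t) := by
      field_simp
      ring
    rw [hident, sub_eq_zero]
  constructor
  · intro h t
    exact ⟨(key1 t).mp (h.1 t), (key2 t).mp (h.2 t)⟩
  · intro h
    exact ⟨fun t => (key1 t).mpr (h t).1, fun t => (key2 t).mpr (h t).2⟩
end

section
/- Let μ > 0 and let r, θ : ℝ → ℝ be twice continuously differentiable with r(t) > 0 for all t, and let λ₁, λ₂, λ₃, λ₄ : ℝ → ℝ be differentiable with λ₃, λ₄ twice differentiable, satisfying for all t: λ̇₁ = −λ₃(2μ/r³ + θ̇²) − 2λ₄ ṙ θ̇ / r², λ̇₂ = 0, λ̇₃ = 2λ₄θ̇/r − λ₁, and λ̇₄ = 2λ₄ṙ/r − 2λ₃ r θ̇ − λ₂. Define u_r = −λ₃ and u_θ = −λ₄. Then for all t: ü_r = (θ̇² + 2μ/r³) u_r + (2θ̈/r) u_θ + (2θ̇/r) u̇_θ and ü_θ = −(2ṙθ̇ + 2rθ̈) u_r + (2r̈/r − 2ṙ²/r²)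 u_θ − 2rθ̇ u̇_r + (2ṙ/r) u̇_θ. -/
/-- Eliminating the costates from the costate equations of the minimum-effort optimal
control problem for the planar two-body problem in polar coordinates yields the same
second-order ODEs for the controls `u_r = −λ₃`, `u_θ = −λ₄` as the variational approach. -/
theorem stmt_9 (μ : ℝ) (hμ : 0 < μ)
    (r θ lam₁ lam₂ lam₃ lam₄ : ℝ → ℝ)
    (hr : ContDiff ℝ 2 r) (hθ : ContDiff ℝ 2 θ)
    (hrpos : ∀ t, 0 < r t)
    (hlam₁ : Differentiable ℝ lam₁) (hlam₂ : Differentiable ℝ lam₂)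
    (hlam₃ : Differentiable ℝ lam₃) (hlam₃' : Differentiable ℝ (deriv lam₃))
    (hlam₄ : Differentiable ℝ lam₄) (hlam₄' : Differentiable ℝ (deriv lam₄))
    (h1 : ∀ t, deriv lam₁ t
      = -lam₃ t * (2 * μ / r t ^ 3 + deriv θ t ^ 2)
        - 2 * lam₄ t * deriv r t * deriv θ t / r t ^ 2)
    (h2 : ∀ t, deriv lam₂ t = 0)
    (h3 : ∀ t, deriv lam₃ t = 2 * lam₄ t * deriv θ t / r t - lam₁ t)
    (h4 : ∀ t, deriv lam₄ t
      = 2 * lam₄ t * deriv r t / r t - 2 * lam₃ t * r t * deriv θ t - lam₂ t)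
    (ur uθ : ℝ → ℝ) (hur : ∀ t, ur t = -lam₃ t) (huθ : ∀ t, uθ t = -lam₄ t) :
    ∀ t,
      deriv (deriv ur) t
        = (deriv θ t ^ 2 + 2 * μ / r t ^ 3) * ur t
          + (2 * deriv (deriv θ) t / r t) * uθ t + (2 * deriv θ t / r t) * deriv uθ t
      ∧ deriv (deriv uθ) t
        = -(2 * deriv r t * deriv θ t + 2 * r t * deriv (deriv θ) t) * ur t
          + (2 * deriv (deriv r) t / r t - 2 * deriv r t ^ 2 / r t ^ 2) * uθ t
          - 2 * r t * deriv θ t * deriv ur t + (2 * deriv r t / r t) * deriv uθ t := by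
  have hrd : Differentiable ℝ r := hr.differentiable (by norm_num)
  have hθd : Differentiable ℝ θ := hθ.differentiable (by norm_num)
  have hrd' : Differentiable ℝ (deriv r) :=
    ((contDiff_succ_iff_deriv.mp
      (show ContDiff ℝ ((1:ℕ∞)+1) r by exact_mod_cast hr)).2.2).differentiable (by norm_num)
  have hθd' : Differentiable ℝ (deriv θ) :=
    ((contDiff_succ_iff_deriv.mp
      (show ContDiff ℝ ((1:ℕ∞)+1) θ by exact_mod_cast hθ)).2.2).differentiable (by norm_num)
  have hrne : ∀ s, r s ≠ 0 := fun s => (hrpos s).ne'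
  have hurf : ur = fun s => -lam₃ s := funext hur
  have huθf : uθ = fun s => -lam₄ s := funext huθ
  -- closed form for deriv ur
  have durf : deriv ur = fun s => lam₁ s - 2 * lam₄ s * deriv θ s / r s := by
    funext s
    rw [hurf, show (fun s => -lam₃ s) = -lam₃ from rfl, deriv.neg, h3]
    ring
  -- closed form for deriv uθ
  have duθf : deriv uθ = fun s => lam₂ s + 2 * lam₃ s * r s * deriv θ s
      - 2 * lam₄ s * deriv r s / r s := by
    funext s
    rw [huθf, show (fun s => -lam₄ s) = -lam₄ from rfl, deriv.neg, h4]
    ring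
  intro t
  constructor
  · -- first equation
    have key : HasDerivAt (fun s => lam₁ s - 2 * lam₄ s * deriv θ s / r s)
        (deriv lam₁ t -
          ((2 * deriv lam₄ t * deriv θ t + 2 * lam₄ t * deriv (deriv θ) t) * r t
            - 2 * lam₄ t * deriv θ t * deriv r t) / r t ^ 2) t := by
      exact (hlam₁ t).hasDerivAt.sub
        (((((hlam₄ t).hasDerivAt.const_mul 2).mul (hθd' t).hasDerivAt).div
          (hrd t).hasDerivAt (hrne t)))
    have e1 : deriv (deriv ur) t = deriv lam₁ t -
          ((2 * deriv lam₄ t * deriv θ t + 2 * lam₄ t * deriv (deriv θ) t) * r t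
            - 2 * lam₄ t * deriv θ t * deriv r t) / r t ^ 2 := by
      rw [durf]; exact key.deriv
    rw [e1, h1, h4, hur, huθ, duθf]
    have h0 := hrne t
    field_simp
    ring
  · -- second equation
    have key : HasDerivAt (fun s => lam₂ s + 2 * lam₃ s * r s * deriv θ s
        - 2 * lam₄ s * deriv r s / r s)
        (deriv lam₂ t
          + ((2 * deriv lam₃ t * r t + 2 * lam₃ t * deriv r t) * deriv θ t
              + 2 * lam₃ t * r t * deriv (deriv θ) t)
          - ((2 * deriv lam₄ t * deriv r t + 2 * lam₄ t * deriv (deriv r) t) * r t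
              - 2 * lam₄ t * deriv r t * deriv r t) / r t ^ 2) t := by
      exact ((hlam₂ t).hasDerivAt.add
        (((((hlam₃ t).hasDerivAt.const_mul 2).mul (hrd t).hasDerivAt).mul
          (hθd' t).hasDerivAt))).sub
        (((((hlam₄ t).hasDerivAt.const_mul 2).mul (hrd' t).hasDerivAt).div
          (hrd t).hasDerivAt (hrne t)))
    have e2 : deriv (deriv uθ) t = deriv lam₂ t
          + ((2 * deriv lam₃ t * r t + 2 * lam₃ t * deriv r t) * deriv θ t
              + 2 * lam₃ t * r t * deriv (deriv θ) t)
          - ((2 * deriv lam₄ t * deriv r t + 2 * lam₄ t * deriv (deriv r) t) * r t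
              - 2 * lam₄ t * deriv r t * deriv r t) / r t ^ 2 := by
      rw [duθf]; exact key.deriv
    rw [e2, h2, h3, h4, hur, huθ, durf, duθf]
    have h0 := hrne t
    field_simp
    ring
end

section
/- Let m, k > 0 and let x, u : ℝ → ℝ be twice differentiable functions satisfying, for all t: m ẍ(t) + k x(t) = u(t) and m ü(t) + k u(t) = 0. Then the function Φ₅(t) = m ẋ(t) u̇(t) + k x(t) u(t) − ½ u(t)² is constant. -/
/-- Along trajectories of the controlled undamped mass-spring system
`m ẍ + k x = u` with minimum-effort optimal control satisfying `m ü + k u = 0`, the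
Noether quantity `Φ₅ = m ẋ u̇ + k x u − ½ u²` is constant. -/
theorem stmt_12 (m k : ℝ) (hm : 0 < m) (hk : 0 < k)
    (x u : ℝ → ℝ)
    (hx : Differentiable ℝ x) (hx' : Differentiable ℝ (deriv x))
    (hu : Differentiable ℝ u) (hu' : Differentiable ℝ (deriv u))
    (heq : ∀ t, m * deriv (deriv x) t + k * x t = u t)
    (hopt : ∀ t, m * deriv (deriv u) t + k * u t = 0) :
    ∀ t₁ t₂ : ℝ,
      m * deriv x t₁ * deriv u t₁ + k * x t₁ * u t₁ - (1/2 : ℝ) * u t₁ ^ 2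
        = m * deriv x t₂ * deriv u t₂ + k * x t₂ * u t₂ - (1/2 : ℝ) * u t₂ ^ 2 := by
  intro t₁ t₂
  set Φ : ℝ → ℝ := fun t =>
    m * deriv x t * deriv u t + k * x t * u t - (1/2 : ℝ) * u t ^ 2 with hΦ
  have key : ∀ t, HasDerivAt Φ 0 t := by
    intro t
    have hxd := hx t
    have hud := hu t
    have hx'd := (hx' t).hasDerivAt
    have hu'd := (hu' t).hasDerivAt
    have h1 : HasDerivAt Φ
        (m * (deriv (deriv x) t * deriv u t + deriv x t * deriv (deriv u) t)
          + k * (deriv x t * u t + x t * deriv u t)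
          - (1/2 : ℝ) * (2 * u t ^ 1 * deriv u t)) t := by
      have h0 := (((hx'd.mul hu'd).const_mul m).add
        ((hxd.hasDerivAt.mul hud.hasDerivAt).const_mul k)).sub
        ((hud.hasDerivAt.pow 2).const_mul (1/2 : ℝ))
      simpa [hΦ, mul_assoc, Pi.add_def, Pi.sub_def] using h0
    convert h1 using 1
    linear_combination -(deriv u t) * (heq t) - (deriv x t) * (hopt t)
  have : Φ t₁ = Φ t₂ := by
    have := is_const_of_deriv_eq_zero (f := Φ)
      (fun t => (key t).differentiableAt) (fun t => (key t).deriv) t₁ t₂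
    exact this
  simpa [hΦ] using this
end

section
/- Let m, k > 0 and set ω = √(k/m). Let u : ℝ → ℝ be twice differentiable satisfying m ü(t) + k u(t) = 0 for all t. Then the function Φ₃(t) = −u(t) √(m k) sin(ω t) − m u̇(t) cos(ω t) is constant. -/
/-- If the minimum-effort optimal control `u` of the undamped mass-spring system
satisfies `m ü + k u = 0`, then the Noether quantity
`Φ₃ = −u √(mk) sin(ωt) − m u̇ cos(ωt)`, with `ω = √(k/m)`, is constant. -/
theorem stmt_13 (m k : ℝ) (hm : 0 < m) (hk : 0 < k)
    (ω : ℝ) (hω : ω = Real.sqrt (k / m))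
    (u : ℝ → ℝ) (hu : Differentiable ℝ u) (hu' : Differentiable ℝ (deriv u))
    (hopt : ∀ t, m * deriv (deriv u) t + k * u t = 0) :
    ∀ t₁ t₂ : ℝ,
      -u t₁ * Real.sqrt (m * k) * Real.sin (ω * t₁) - m * deriv u t₁ * Real.cos (ω * t₁)
        = -u t₂ * Real.sqrt (m * k) * Real.sin (ω * t₂)
          - m * deriv u t₂ * Real.cos (ω * t₂) := by
  set c := Real.sqrt (m * k) with hc
  have hsm : (0:ℝ) < Real.sqrt m := Real.sqrt_pos.mpr hm
  have hmk : c = Real.sqrt m * Real.sqrt k := Real.sqrt_mul hm.le k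
  have hω' : ω = Real.sqrt k / Real.sqrt m := by
    rw [hω, Real.sqrt_div hk.le]
  have hmω : m * ω = c := by
    rw [hω', hmk]
    field_simp
    linear_combination (-1) * Real.mul_self_sqrt hm.le
  have hcω : c * ω = k := by
    rw [hω', hmk]
    field_simp
    linear_combination Real.mul_self_sqrt hk.le
  set g : ℝ → ℝ := fun t => -u t * c * Real.sin (ω * t) - m * deriv u t * Real.cos (ω * t)
    with hg
  have hderiv : ∀ t, HasDerivAt g 0 t := by
    intro t
    have hu1 : HasDerivAt u (deriv u t) t := (hu t).hasDerivAt
    have hu2 : HasDerivAt (deriv u) (deriv (deriv u) t) t := (hu' t).hasDerivAt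
    have hsin : HasDerivAt (fun t => Real.sin (ω * t)) (Real.cos (ω * t) * ω) t := by
      simpa [Function.comp_def] using (Real.hasDerivAt_sin (ω * t)).comp t ((hasDerivAt_id t).const_mul ω)
    have hcos : HasDerivAt (fun t => Real.cos (ω * t)) (-Real.sin (ω * t) * ω) t := by
      simpa [Function.comp_def] using (Real.hasDerivAt_cos (ω * t)).comp t ((hasDerivAt_id t).const_mul ω)
    have h1 : HasDerivAt (fun t => -u t * c * Real.sin (ω * t))
        ((-deriv u t * c) * Real.sin (ω * t) + (-u t * c) * (Real.cos (ω * t) * ω)) t := by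
      exact ((hu1.neg.mul_const c).mul hsin)
    have h2 : HasDerivAt (fun t => m * deriv u t * Real.cos (ω * t))
        ((m * deriv (deriv u) t) * Real.cos (ω * t) + (m * deriv u t) * (-Real.sin (ω * t) * ω)) t := by
      exact ((hu2.const_mul m).mul hcos)
    have h3 := h1.sub h2
    refine h3.congr_deriv ?_
    have hopt' := hopt t
    have hmu : m * deriv (deriv u) t = -(k * u t) := by linarith
    rw [hmu]
    linear_combination (deriv u t * Real.sin (ω * t)) * hmω + (-(u t) * Real.cos (ω * t)) * hcω
  intro t₁ t₂
  have : g t₁ = g t₂ := by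
    apply is_const_of_deriv_eq_zero
    · intro x; exact (hderiv x).differentiableAt
    · intro x; exact (hderiv x).deriv
  simpa [hg] using this
end

section
/- Let L : ℝⁿ × ℝⁿ → ℝ be continuously differentiable (an autonomous Lagrangian, with no explicit time dependence) and let q : ℝ → ℝⁿ be twice differentiable such that t ↦ ∂L/∂v(q(t), q̇(t)) is differentiable and the Euler–Lagrange equations hold: for all t, (d/dt)(∂L/∂v(q(t), q̇(t))) = ∂L/∂q(q(t), q̇(t)). Then the function H(t) = ⟨∂L/∂v(q(t), q̇(t)), q̇(t)⟩ − L(q(t), q̇(t)) is constant. -/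
open scoped RealInnerProductSpace

lemma grad_apply_aux {F : Type*} [NormedAddCommGroup F] [InnerProductSpace ℝ F]
    [CompleteSpace F] {g : F → ℝ} {x : F} (h : DifferentiableAt ℝ g x) (u : F) :
    ⟪gradient g x, u⟫ = fderiv ℝ g x u := by
  rw [h.hasGradientAt.hasFDerivAt.fderiv, InnerProductSpace.toDual_apply_apply]

/-- For an autonomous Lagrangian `L(q, v)`, along any solution of the Euler–Lagrange
equations the Hamiltonian `H = ⟨∂L/∂v, q̇⟩ − L` is constant (Noether's theorem for the
time-translation symmetry). -/
theorem stmt_14 (n : ℕ)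
    (L : EuclideanSpace ℝ (Fin n) × EuclideanSpace ℝ (Fin n) → ℝ) (hL : ContDiff ℝ 1 L)
    (q : ℝ → EuclideanSpace ℝ (Fin n))
    (hq : Differentiable ℝ q) (hq' : Differentiable ℝ (deriv q))
    (hp : Differentiable ℝ (fun t => gradient (fun v => L (q t, v)) (deriv q t)))
    (hEL : ∀ t, deriv (fun s => gradient (fun v => L (q s, v)) (deriv q s)) t
        = gradient (fun a => L (a, deriv q t)) (q t)) :
    ∀ t₁ t₂ : ℝ,
      ⟪gradient (fun v => L (q t₁, v)) (deriv q t₁), deriv q t₁⟫ - L (q t₁, deriv q t₁)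
        = ⟪gradient (fun v => L (q t₂, v)) (deriv q t₂), deriv q t₂⟫
          - L (q t₂, deriv q t₂) := by
  have hLd : Differentiable ℝ L := hL.differentiable one_ne_zero
  have key : ∀ t, HasDerivAt (fun s =>
      ⟪gradient (fun v => L (q s, v)) (deriv q s), deriv q s⟫ - L (q s, deriv q s)) 0 t := by
    intro t
    have hqd : HasDerivAt q (deriv q t) t := (hq t).hasDerivAt
    have hq'd : HasDerivAt (deriv q) (deriv (deriv q) t) t := (hq' t).hasDerivAt
    have hpd : HasDerivAt (fun s => gradient (fun v => L (q s, v)) (deriv q s))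
        (gradient (fun a => L (a, deriv q t)) (q t)) t := by
      have h := (hp t).hasDerivAt
      rwa [hEL t] at h
    have hInner := hpd.inner ℝ hq'd
    have hD : HasFDerivAt L (fderiv ℝ L (q t, deriv q t)) (q t, deriv q t) :=
      (hLd _).hasFDerivAt
    have hc : HasDerivAt (fun s => (q s, deriv q s)) (deriv q t, deriv (deriv q) t) t :=
      hqd.prodMk hq'd
    have hLc : HasDerivAt (fun s => L (q s, deriv q s))
        (fderiv ℝ L (q t, deriv q t) (deriv q t, deriv (deriv q) t)) t :=
      hD.comp_hasDerivAt t hc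
    -- partial fderivs
    have h1 : HasFDerivAt (fun a => L (a, deriv q t))
        ((fderiv ℝ L (q t, deriv q t)).comp
          (ContinuousLinearMap.inl ℝ (EuclideanSpace ℝ (Fin n)) (EuclideanSpace ℝ (Fin n))))
        (q t) :=
      hD.comp (q t) (hasFDerivAt_prodMk_left _ _)
    have h2 : HasFDerivAt (fun v => L (q t, v))
        ((fderiv ℝ L (q t, deriv q t)).comp
          (ContinuousLinearMap.inr ℝ (EuclideanSpace ℝ (Fin n)) (EuclideanSpace ℝ (Fin n))))
        (deriv q t) :=
      hD.comp (deriv q t) (hasFDerivAt_prodMk_right _ _)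
    have e1 : ⟪gradient (fun a => L (a, deriv q t)) (q t), deriv q t⟫
        = fderiv ℝ L (q t, deriv q t) (deriv q t, 0) := by
      rw [grad_apply_aux h1.differentiableAt, h1.fderiv]; rfl
    have e2 : ⟪gradient (fun v => L (q t, v)) (deriv q t), deriv (deriv q) t⟫
        = fderiv ℝ L (q t, deriv q t) (0, deriv (deriv q) t) := by
      rw [grad_apply_aux h2.differentiableAt, h2.fderiv]; rfl
    have split : fderiv ℝ L (q t, deriv q t) (deriv q t, deriv (deriv q) t)
        = fderiv ℝ L (q t, deriv q t) (deriv q t, 0)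
          + fderiv ℝ L (q t, deriv q t) (0, deriv (deriv q) t) := by
      rw [← map_add]
      congr 1
      simp [Prod.ext_iff]
    have := hInner.sub hLc
    convert this using 1
    · rfl
    · rfl
    · rfl
    rw [e1, e2, split]
    ring
  intro t₁ t₂
  exact is_const_of_deriv_eq_zero (fun t => (key t).differentiableAt)
    (fun t => (key t).deriv) t₁ t₂
end

section
/- Let L : ℝ × ℝⁿ × ℝⁿ → ℝ be continuously differentiable, let ξ : ℝ × ℝⁿ → ℝ, η : ℝ × ℝⁿ → ℝⁿ, and φ : ℝ × ℝⁿ → ℝ be continuously differentiable, and let q : ℝ → ℝⁿ be twice differentiable with t ↦ ∂L/∂v(t, q(t), q̇(t)) differentiable, satisfying the Euler–Lagrange equations: for all t, (d/dt)(∂L/∂v(t, q(t), q̇(t))) = ∂L/∂q(t, q(t), q̇(t)). Write ξ(t), η(t), φ(t) for the compositions with t ↦ (t, q(t)), with total time derivatives ξ̇, η̇, φ̇ along the curve. Suppose the divergence-invariance identity holds along the curve: for all t, ξ(t) ∂L/∂t + ⟨η(t), ∂L/∂q⟩ + ⟨η̇(t) − ξ̇(t) q̇(t), ∂L/∂v⟩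 = −ξ̇(t) L + φ̇(t), where all partial derivatives of L are evaluated at (t, q(t), q̇(t)). Then the function Φ(t) = ⟨∂L/∂v(t, q(t), q̇(t)), ξ(t) q̇(t) − η(t)⟩ − ξ(t) L(t, q(t), q̇(t)) + φ(t) is constant. -/
open scoped RealInnerProductSpace

private lemma inner_gradient_eq {E : Type*} [NormedAddCommGroup E] [InnerProductSpace ℝ E]
    [CompleteSpace E] (f : E → ℝ) (x v : E) :
    ⟪gradient f x, v⟫ = fderiv ℝ f x v := by
  rw [gradient, InnerProductSpace.toDual_symm_apply]

/-- Divergence-invariant form of Noether's theorem: if `ξ, η, φ` satisfy the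
divergence-invariance identity `E{L} = −ξ̇ L + φ̇` along a solution `q` of the
Euler–Lagrange equations, then `Φ = ⟨∂L/∂v, ξ q̇ − η⟩ − ξ L + φ` is constant along the
solution. -/
theorem stmt_15 (n : ℕ)
    (L : ℝ × EuclideanSpace ℝ (Fin n) × EuclideanSpace ℝ (Fin n) → ℝ) (hL : ContDiff ℝ 1 L)
    (ξ : ℝ × EuclideanSpace ℝ (Fin n) → ℝ)
    (η : ℝ × EuclideanSpace ℝ (Fin n) → EuclideanSpace ℝ (Fin n))
    (φ : ℝ × EuclideanSpace ℝ (Fin n) → ℝ)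
    (hξ : ContDiff ℝ 1 ξ) (hη : ContDiff ℝ 1 η) (hφ : ContDiff ℝ 1 φ)
    (q : ℝ → EuclideanSpace ℝ (Fin n))
    (hq : Differentiable ℝ q) (hq' : Differentiable ℝ (deriv q))
    (hp : Differentiable ℝ (fun t => gradient (fun v => L (t, q t, v)) (deriv q t)))
    (hEL : ∀ t, deriv (fun s => gradient (fun v => L (s, q s, v)) (deriv q s)) t
        = gradient (fun a => L (t, a, deriv q t)) (q t))
    (hinv : ∀ t,
      ξ (t, q t) * deriv (fun s => L (s, q t, deriv q t)) t
        + ⟪η (t, q t), gradient (fun a => L (t, a, deriv q t)) (q t)⟫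
        + ⟪deriv (fun s => η (s, q s)) t - deriv (fun s => ξ (s, q s)) t • deriv q t,
            gradient (fun v => L (t, q t, v)) (deriv q t)⟫
      = -deriv (fun s => ξ (s, q s)) t * L (t, q t, deriv q t)
          + deriv (fun s => φ (s, q s)) t) :
    ∀ t₁ t₂ : ℝ,
      ⟪gradient (fun v => L (t₁, q t₁, v)) (deriv q t₁),
          ξ (t₁, q t₁) • deriv q t₁ - η (t₁, q t₁)⟫
        - ξ (t₁, q t₁) * L (t₁, q t₁, deriv q t₁) + φ (t₁, q t₁)
      = ⟪gradient (fun v => L (t₂, q t₂, v)) (deriv q t₂),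
          ξ (t₂, q t₂) • deriv q t₂ - η (t₂, q t₂)⟫
        - ξ (t₂, q t₂) * L (t₂, q t₂, deriv q t₂) + φ (t₂, q t₂) := by
  have key : ∀ t, HasDerivAt (fun s =>
      ⟪gradient (fun v => L (s, q s, v)) (deriv q s), ξ (s, q s) • deriv q s - η (s, q s)⟫
        - ξ (s, q s) * L (s, q s, deriv q s) + φ (s, q s)) 0 t := by
    intro t
    have hLD : HasFDerivAt L (fderiv ℝ L (t, q t, deriv q t)) (t, q t, deriv q t) :=
      (hL.differentiable one_ne_zero (t, q t, deriv q t)).hasFDerivAt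
    have hF : HasDerivAt (fun s => (s, q s, deriv q s))
        ((1 : ℝ), deriv q t, deriv (deriv q) t) t :=
      HasDerivAt.prodMk (hasDerivAt_id t) (HasDerivAt.prodMk ((hq t).hasDerivAt) ((hq' t).hasDerivAt))
    have hLF : HasDerivAt (fun s => L (s, q s, deriv q s))
        (fderiv ℝ L (t, q t, deriv q t) (1, deriv q t, deriv (deriv q) t)) t :=
      hLD.comp_hasDerivAt t hF
    have htime : deriv (fun s => L (s, q t, deriv q t)) t
        = fderiv ℝ L (t, q t, deriv q t) (1, 0, 0) := by
      have h1 : HasDerivAt (fun s => ((s : ℝ), q t, deriv q t)) ((1 : ℝ), 0, 0) t :=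
        HasDerivAt.prodMk (hasDerivAt_id t) (hasDerivAt_const t (q t, deriv q t))
      exact (hLD.comp_hasDerivAt t h1).deriv
    have hgq : ∀ b, ⟪gradient (fun a => L (t, a, deriv q t)) (q t), b⟫
        = fderiv ℝ L (t, q t, deriv q t) (0, b, 0) := by
      intro b
      have h1 : HasFDerivAt (fun a : EuclideanSpace ℝ (Fin n) => ((t : ℝ), a, deriv q t))
          ((0 : EuclideanSpace ℝ (Fin n) →L[ℝ] ℝ).prod
            ((ContinuousLinearMap.id ℝ (EuclideanSpace ℝ (Fin n))).prod 0)) (q t) :=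
        HasFDerivAt.prodMk (hasFDerivAt_const t (q t))
          (HasFDerivAt.prodMk (hasFDerivAt_id (q t)) (hasFDerivAt_const (deriv q t) (q t)))
      have h2 : HasFDerivAt (fun a => L (t, a, deriv q t))
          ((fderiv ℝ L (t, q t, deriv q t)).comp
            ((0 : EuclideanSpace ℝ (Fin n) →L[ℝ] ℝ).prod
              ((ContinuousLinearMap.id ℝ (EuclideanSpace ℝ (Fin n))).prod 0))) (q t) :=
        hLD.comp (q t) h1
      rw [inner_gradient_eq, h2.fderiv]
      simp
    have hpv : ∀ c, ⟪gradient (fun v => L (t, q t, v)) (deriv q t), c⟫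
        = fderiv ℝ L (t, q t, deriv q t) (0, 0, c) := by
      intro c
      have h1 : HasFDerivAt (fun a : EuclideanSpace ℝ (Fin n) => ((t : ℝ), q t, a))
          ((0 : EuclideanSpace ℝ (Fin n) →L[ℝ] ℝ).prod
            ((0 : EuclideanSpace ℝ (Fin n) →L[ℝ] EuclideanSpace ℝ (Fin n)).prod
              (ContinuousLinearMap.id ℝ (EuclideanSpace ℝ (Fin n))))) (deriv q t) :=
        HasFDerivAt.prodMk (hasFDerivAt_const t (deriv q t))
          (HasFDerivAt.prodMk (hasFDerivAt_const (q t) (deriv q t)) (hasFDerivAt_id (deriv q t)))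
      have h2 : HasFDerivAt (fun v => L (t, q t, v))
          ((fderiv ℝ L (t, q t, deriv q t)).comp
            ((0 : EuclideanSpace ℝ (Fin n) →L[ℝ] ℝ).prod
              ((0 : EuclideanSpace ℝ (Fin n) →L[ℝ] EuclideanSpace ℝ (Fin n)).prod
                (ContinuousLinearMap.id ℝ (EuclideanSpace ℝ (Fin n)))))) (deriv q t) :=
        hLD.comp (deriv q t) h1
      rw [inner_gradient_eq, h2.fderiv]
      simp
    have hdecomp : fderiv ℝ L (t, q t, deriv q t) (1, deriv q t, deriv (deriv q) t)
        = fderiv ℝ L (t, q t, deriv q t) (1, 0, 0)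
          + fderiv ℝ L (t, q t, deriv q t) (0, deriv q t, 0)
          + fderiv ℝ L (t, q t, deriv q t) (0, 0, deriv (deriv q) t) := by
      rw [← map_add, ← map_add]
      norm_num [Prod.ext_iff]
    have hcurve : HasDerivAt (fun s => (s, q s)) ((1 : ℝ), deriv q t) t :=
      HasDerivAt.prodMk (hasDerivAt_id t) (hq t).hasDerivAt
    have hξd : HasDerivAt (fun s => ξ (s, q s)) (deriv (fun s => ξ (s, q s)) t) t :=
      (((hξ.differentiable one_ne_zero (t, q t)).comp t hcurve.differentiableAt) :
        DifferentiableAt ℝ (fun s => ξ (s, q s)) t).hasDerivAt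
    have hηd : HasDerivAt (fun s => η (s, q s)) (deriv (fun s => η (s, q s)) t) t :=
      (((hη.differentiable one_ne_zero (t, q t)).comp t hcurve.differentiableAt) :
        DifferentiableAt ℝ (fun s => η (s, q s)) t).hasDerivAt
    have hφd : HasDerivAt (fun s => φ (s, q s)) (deriv (fun s => φ (s, q s)) t) t :=
      (((hφ.differentiable one_ne_zero (t, q t)).comp t hcurve.differentiableAt) :
        DifferentiableAt ℝ (fun s => φ (s, q s)) t).hasDerivAt
    have hpd : HasDerivAt (fun s => gradient (fun v => L (s, q s, v)) (deriv q s))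
        (gradient (fun a => L (t, a, deriv q t)) (q t)) t := by
      have h := (hp t).hasDerivAt
      rwa [hEL t] at h
    have hw : HasDerivAt (fun s => ξ (s, q s) • deriv q s - η (s, q s))
        (ξ (t, q t) • deriv (deriv q) t + deriv (fun s => ξ (s, q s)) t • deriv q t
          - deriv (fun s => η (s, q s)) t) t :=
      (hξd.smul (hq' t).hasDerivAt).sub hηd
    have hA := HasDerivAt.inner ℝ hpd hw
    have hB := hξd.mul hLF
    have hΦ := (hA.sub hB).add hφd
    refine hΦ.congr_deriv ?_
    have hi := hinv t
    rw [htime,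
      real_inner_comm (gradient (fun a => L (t, a, deriv q t)) (q t)) (η (t, q t))] at hi
    rw [hdecomp, ← hpv (deriv (deriv q) t), ← hgq (deriv q t)]
    simp only [inner_sub_left, inner_sub_right, inner_add_right, inner_add_left,
      real_inner_smul_left, real_inner_smul_right] at hi ⊢
    rw [real_inner_comm (gradient (fun v => L (t, q t, v)) (deriv q t))
        (deriv (fun s => η (s, q s)) t),
      real_inner_comm (gradient (fun v => L (t, q t, v)) (deriv q t)) (deriv q t)] at hi
    linarith
  intro t₁ t₂
  exact is_const_of_deriv_eq_zero (fun t => (key t).differentiableAt)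
    (fun t => (key t).deriv) t₁ t₂
end
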